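/- arXiv:1612.00178 — 4 statements merged into one kernel-verified Lean document; each statement's English description precedes it below -/
import Mathlib

section
/- Let m be a real number with 0 ≤ m ≤ 1/2 and √m + √(1−m) ≤ 1.3168. Then m ≤ 0.1605. -/
/-!
Squaring gives `(√x + √(1 - x))² = 1 + 2√(x(1 - x))`, and `x(1 - x)` is strictly increasing on
`[0, 1/2]`; hence so is `√x + √(1 - x)`. Its value at `0.1605` already exceeds `1.3168`.
-/

open Real Set

lemma sq_sqrt_add_sqrt_one_sub {x : ℝ} (h0 : 0 ≤ x) (h1 : x ≤ 1) :
    (√x + √(1 - x)) ^ 2 = 1 + 2 * √(x * (1 - x)) := by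
  rw [add_sq, sq_sqrt h0, sq_sqrt (sub_nonneg.2 h1), sqrt_mul h0]
  ring

lemma strictMonoOn_sqrt_add_sqrt_one_sub :
    StrictMonoOn (fun x : ℝ => √x + √(1 - x)) (Icc 0 (1 / 2)) := by
  rintro x ⟨hx0, hx1⟩ y ⟨hy0, hy1⟩ hxy
  have hprod : x * (1 - x) < y * (1 - y) := by nlinarith
  have hsq : (√x + √(1 - x)) ^ 2 < (√y + √(1 - y)) ^ 2 := by
    rw [sq_sqrt_add_sqrt_one_sub hx0 (by linarith), sq_sqrt_add_sqrt_one_sub hy0 (by linarith)]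
    gcongr
    nlinarith
  exact lt_of_pow_lt_pow_left₀ 2 (by positivity) hsq

lemma lt_sqrt_add_sqrt_one_sub_at_k₁ : (1.3168 : ℝ) < √0.1605 + √(1 - 0.1605) := by
  have hroot : (0.36698112 : ℝ) < √(0.1605 * (1 - 0.1605)) :=
    (lt_sqrt (by norm_num)).2 (by norm_num)
  have hsq : (1.3168 : ℝ) ^ 2 < (√0.1605 + √(1 - 0.1605)) ^ 2 := by
    rw [sq_sqrt_add_sqrt_one_sub (by norm_num) (by norm_num)]
    linarith
  exact lt_of_pow_lt_pow_left₀ 2 (by positivity) hsq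

theorem k1_bound_general (m : ℝ) (h1 : m ≤ 1 / 2)
    (h : Real.sqrt m + Real.sqrt (1 - m) ≤ 1.3168) : m ≤ 0.1605 := by
  by_contra! hm
  have hmono : √0.1605 + √(1 - 0.1605) < √m + √(1 - m) :=
    strictMonoOn_sqrt_add_sqrt_one_sub ⟨by norm_num, by norm_num⟩ ⟨by linarith, h1⟩ hm
  linarith [lt_sqrt_add_sqrt_one_sub_at_k₁]

theorem k1_bound (m : ℝ) (h0 : 0 ≤ m) (h1 : m ≤ 1 / 2)
    (h : Real.sqrt m + Real.sqrt (1 - m) ≤ 1.3168) : m ≤ 0.1605 :=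
  k1_bound_general m h1 h
end

section
/- Let m be a real number with 0.0244 ≤ m ≤ 0.1605 and √(1−2m) + √m ≤ 1.1606. Then m ≤ 0.0411. -/
/-! `f t = √(1 - 2t) + √t` is strictly increasing on `[0, 1/6]`, since `f' t = 1/(2√t) - 1/√(1 - 2t)`
is positive exactly when `t < 1/6`; as `f 0.0411 > 1.1606`, `f m ≤ 1.1606` forces `m ≤ 0.0411`. -/

open Real Set

lemma hasDerivAt_sqrt_one_sub_two_mul_add_sqrt {x : ℝ} (hx : 0 < x) (hx' : x < 1 / 2) :
    HasDerivAt (fun t => √(1 - 2 * t) + √t) (-2 / (2 * √(1 - 2 * x)) + 1 / (2 * √x)) x := by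
  have hlin : HasDerivAt (fun t : ℝ => 1 - 2 * t) (-2) x := by
    simpa using ((hasDerivAt_id x).const_mul 2).const_sub 1
  exact (hlin.sqrt (by linarith)).add (hasDerivAt_sqrt hx.ne')

lemma two_mul_sqrt_lt_sqrt_one_sub_two_mul {x : ℝ} (hx : x < 1 / 6) : 2 * √x < √(1 - 2 * x) := by
  rw [show 2 * √x = √(4 * x) by
    rw [sqrt_mul (by norm_num), show (4 : ℝ) = 2 ^ 2 by norm_num, sqrt_sq (by norm_num)]]
  exact (sqrt_lt_sqrt_iff_of_pos (by linarith)).2 (by linarith)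

lemma strictMonoOn_sqrt_one_sub_two_mul_add_sqrt :
    StrictMonoOn (fun t => √(1 - 2 * t) + √t) (Icc 0 (1 / 6)) := by
  refine strictMonoOn_of_deriv_pos (convex_Icc _ _) (by fun_prop) fun x hx => ?_
  rw [interior_Icc] at hx
  obtain ⟨hx0, hx6⟩ := hx
  rw [(hasDerivAt_sqrt_one_sub_two_mul_add_sqrt hx0 (by linarith)).deriv]
  have ha : 0 < √(1 - 2 * x) := sqrt_pos.2 (by linarith)
  have hb : 0 < √x := sqrt_pos.2 hx0
  have hab := two_mul_sqrt_lt_sqrt_one_sub_two_mul hx6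
  rw [show -2 / (2 * √(1 - 2 * x)) + 1 / (2 * √x)
      = (√(1 - 2 * x) - 2 * √x) / (2 * √(1 - 2 * x) * √x) by field_simp; ring]
  exact div_pos (by linarith) (by positivity)

lemma lt_sqrt_one_sub_two_mul_add_sqrt_0411 : 1.1606 < √(1 - 2 * 0.0411) + √0.0411 := by
  have ha : 0.958 < √(1 - 2 * 0.0411 : ℝ) := lt_sqrt_of_sq_lt (by norm_num)
  have hb : 0.2027 < √(0.0411 : ℝ) := lt_sqrt_of_sq_lt (by norm_num)
  linarith

theorem k4_bound_general (m : ℝ) (h1 : m ≤ 0.1605)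
    (h : Real.sqrt (1 - 2 * m) + Real.sqrt m ≤ 1.1606) : m ≤ 0.0411 := by
  by_contra! hm
  have hlt := strictMonoOn_sqrt_one_sub_two_mul_add_sqrt
    ⟨by norm_num, by norm_num⟩ ⟨by linarith, by linarith⟩ hm
  linarith [lt_sqrt_one_sub_two_mul_add_sqrt_0411]

theorem k4_bound (m : ℝ) (h0 : 0.0244 ≤ m) (h1 : m ≤ 0.1605)
    (h : Real.sqrt (1 - 2 * m) + Real.sqrt m ≤ 1.1606) : m ≤ 0.0411 :=
  k4_bound_general m h1 h
end

section
/- For every real x with 0.0244 ≤ x ≤ 0.1605, one has √(1−3x) + √x > 1.0044. -/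
/-! The function `x ↦ √(1 - 3x) + √x` is concave on `[0, 1/3]`, so on any segment inside that
interval it is bounded below by the smaller of its two endpoint values; at `0.0244` and `0.1605`
these are about `1.1189` and `1.1206`. -/

open Set Real

theorem concaveOn_sqrt_add_mul (a b : ℝ) :
    ConcaveOn ℝ {x | 0 ≤ a + b * x} (fun x => √(a + b * x)) := by
  exact strictConcaveOn_sqrt.concaveOn.comp_affineMap
    (AffineMap.const ℝ ℝ a + (b • LinearMap.id : ℝ →ₗ[ℝ] ℝ).toAffineMap)

theorem concaveOn_sqrt_one_sub_three_mul_add_sqrt :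
    ConcaveOn ℝ (Icc 0 (1 / 3)) (fun x => √(1 - 3 * x) + √x) := by
  have hleft : ConcaveOn ℝ (Icc 0 (1 / 3)) (fun x => √(1 - 3 * x)) := by
    refine ((concaveOn_sqrt_add_mul 1 (-3)).subset (fun x hx => ?_) (convex_Icc _ _)).congr ?_
    · show 0 ≤ 1 + -3 * x
      linarith [hx.2]
    · intro x _
      simp only [neg_mul, ← sub_eq_add_neg]
  have hright : ConcaveOn ℝ (Icc 0 (1 / 3)) (fun x => √x) :=
    strictConcaveOn_sqrt.concaveOn.subset (fun _ hx => hx.1) (convex_Icc _ _)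
  exact hleft.add hright

theorem three_small_bound (x : ℝ) (h0 : 0.0244 ≤ x) (h1 : x ≤ 0.1605) :
    1.0044 < Real.sqrt (1 - 3 * x) + Real.sqrt x := by
  have hseg : x ∈ segment ℝ (0.0244 : ℝ) 0.1605 := by
    rw [segment_eq_Icc (by norm_num)]
    exact ⟨h0, h1⟩
  have hmin := concaveOn_sqrt_one_sub_three_mul_add_sqrt.ge_on_segment
    (by norm_num) (by norm_num) hseg
  have hleft : 1.0044 < √(1 - 3 * 0.0244) + √0.0244 := by
    have : (0.96 : ℝ) ≤ √(1 - 3 * 0.0244) := le_sqrt_of_sq_le (by norm_num)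
    have : (0.15 : ℝ) ≤ √0.0244 := le_sqrt_of_sq_le (by norm_num)
    linarith
  have hright : 1.0044 < √(1 - 3 * 0.1605) + √0.1605 := by
    have : (0.72 : ℝ) ≤ √(1 - 3 * 0.1605) := le_sqrt_of_sq_le (by norm_num)
    have : (0.4 : ℝ) ≤ √0.1605 := le_sqrt_of_sq_le (by norm_num)
    linarith
  exact (lt_min hleft hright).trans_le hmin
end

section
/- With k₇ = 1.4199, k₈ = √(2π/3 + √3/4), k₁ = 0.1605, and k₀ = 11.1962: π/k₇ + (k₈/√3)·(1 − √(k₁)·k₀/((2−k₁)·2√π)) ≥ 2.4990, and 4·2.4990 − √π/√(1−k₁) + 4·k₈/√3 ≥ 11.5561 > k₀. -/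
/-!
Both expressions are monotone in each of the transcendental quantities `π`, `√3`, `√π`,
`k₈` and `√k₁` occurring in them, so each may be replaced by a rational bound on the
unfavourable side; the first inequality holds with a margin of only about `4 · 10⁻⁵`,
which seven significant digits suffice to keep.
-/

open Real

lemma sqrt_three_gt_d7 : (1.7320508 : ℝ) < √3 := Real.lt_sqrt_of_sq_lt (by norm_num)

lemma sqrt_three_lt_d7 : √3 < (1.7320509 : ℝ) := (Real.sqrt_lt' (by norm_num)).2 (by norm_num)

lemma sqrt_pi_gt_d6 : (1.772453 : ℝ) < √π :=
  Real.lt_sqrt_of_sq_lt (by nlinarith [pi_gt_d6])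

lemma sqrt_pi_lt_d6 : √π < (1.772454 : ℝ) :=
  (Real.sqrt_lt' (by norm_num)).2 (by nlinarith [pi_lt_d6])

lemma sqrt_two_pi_div_three_add_sqrt_three_div_four_gt :
    (1.5897821 : ℝ) < √(2 * π / 3 + √3 / 4) :=
  Real.lt_sqrt_of_sq_lt (by linarith [pi_gt_d6, sqrt_three_gt_d7])

lemma pressure_lower_bound :
    (2.4990 : ℝ) ≤ π / 1.4199 + (√(2 * π / 3 + √3 / 4) / √3) *
      (1 - √0.1605 * 11.1962 / ((2 - 0.1605) * (2 * √π))) := by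
  have hk₁ : √0.1605 < (0.40062452 : ℝ) := (Real.sqrt_lt' (by norm_num)).2 (by norm_num)
  calc (2.4990 : ℝ)
      ≤ 3.141592 / 1.4199 + (1.5897821 / 1.7320509) *
          (1 - 0.40062452 * 11.1962 / ((2 - 0.1605) * (2 * 1.772453))) := by norm_num
    _ ≤ π / 1.4199 + (√(2 * π / 3 + √3 / 4) / √3) *
          (1 - √0.1605 * 11.1962 / ((2 - 0.1605) * (2 * √π))) := by
      gcongr ?_ / _ + ?_ / ?_ * (1 - ?_ * _ / (_ * (_ * ?_)))
      all_goals linarith [pi_gt_d6, sqrt_three_lt_d7, sqrt_pi_gt_d6, hk₁,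
        sqrt_two_pi_div_three_add_sqrt_three_div_four_gt]

lemma perimeter_lower_bound :
    (11.5561 : ℝ) ≤ 4 * 2.4990 - √π / √(1 - 0.1605) + 4 * √(2 * π / 3 + √3 / 4) / √3 := by
  have hk₁ : (0.9162423 : ℝ) < √(1 - 0.1605) := Real.lt_sqrt_of_sq_lt (by norm_num)
  calc (11.5561 : ℝ)
      ≤ 4 * 2.4990 - 1.772454 / 0.9162423 + 4 * 1.5897821 / 1.7320509 := by norm_num
    _ ≤ 4 * 2.4990 - √π / √(1 - 0.1605) + 4 * √(2 * π / 3 + √3 / 4) / √3 := by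
      gcongr 4 * 2.4990 - ?_ / ?_ + 4 * ?_ / ?_
      all_goals linarith [sqrt_three_lt_d7, sqrt_pi_lt_d6, hk₁,
        sqrt_two_pi_div_three_add_sqrt_three_div_four_gt]

theorem Fprime_numerics :
    let k₀ : ℝ := 11.1962
    let k₁ : ℝ := 0.1605
    let k₇ : ℝ := 1.4199
    let k₈ : ℝ := Real.sqrt (2 * π / 3 + Real.sqrt 3 / 4)
    (2.4990 ≤ π / k₇ +
        (k₈ / Real.sqrt 3) *
          (1 - Real.sqrt k₁ * k₀ / ((2 - k₁) * (2 * Real.sqrt π)))) ∧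
    (11.5561 ≤ 4 * 2.4990 - Real.sqrt π / Real.sqrt (1 - k₁) +
        4 * k₈ / Real.sqrt 3) ∧
    (11.5561 : ℝ) > k₀ :=
  ⟨pressure_lower_bound, perimeter_lower_bound, by norm_num⟩
end
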